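/- Let I, J ≥ 1 be integers, let μ ∈ ℝ^I and β ∈ ℝ^J be probability vectors with all entries strictly positive, let C ∈ ℝ^{I×J}, and let ε > 0, η > ε. Define F(a,b) = Σ_i μ_i a_i − ε Σ_{i,j} μ_i β_j exp((a_i + b_j − C_{ij})/ε) − (η−ε) log(Σ_j β_j exp(−b_j/(η−ε))) for (a,b) ∈ ℝ^I × ℝ^J. Then the set of maximizers of F is an affine line spanned by the direction ((1,…,1),(−1,…,−1)): (i) if (a,b) maximizes F then for every c ∈ ℝ the point (a_1+c,…,a_I+c, b_1−c,…,b_J−c) also maximizes F; and (ii) if (a,b) and (a',b') both maximize F, then there exists c ∈ ℝ such that a'_i = a_i + c for all i and b'_j = b_j − c for all j. -/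

import Mathlib

/-!
`F` is invariant under `(a, b) ↦ (a + c, b - c)`: the linear term gains `c ∑ μᵢ = c`, the
double sum only sees `aᵢ + bⱼ`, and the log-sum-exp term gains exactly `-c`.
For uniqueness, `F` is concave: its exponential part is strictly concave in the sums `aᵢ + bⱼ`
and its log-sum-exp part is concave by Cauchy–Schwarz. So if two maximizers disagreed on
some `aᵢ + bⱼ`, their midpoint would do strictly better; hence all sums `aᵢ + bⱼ` agree, which
forces the two maximizers to differ by a translation along `(𝟙, -𝟙)`.
-/

open Real BigOperators Finset

/-- The dual objective of the regularized Wasserstein estimator problem. -/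
noncomputable def Fobj {I J : ℕ} (μ : Fin I → ℝ) (β : Fin J → ℝ)
    (C : Fin I → Fin J → ℝ) (ε η : ℝ) (a : Fin I → ℝ) (b : Fin J → ℝ) : ℝ :=
  ∑ i, μ i * a i - ε * ∑ i, ∑ j, μ i * β j * Real.exp ((a i + b j - C i j) / ε)
    - (η - ε) * Real.log (∑ j, β j * Real.exp (-b j / (η - ε)))

lemma exp_add_div_two_le (x y : ℝ) : exp ((x + y) / 2) ≤ (exp x + exp y) / 2 := by
  have := convexOn_exp.2 (Set.mem_univ x) (Set.mem_univ y) one_half_pos.le one_half_pos.le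
    (add_halves 1)
  simp only [smul_eq_mul] at this
  rw [show (x + y) / 2 = 1 / 2 * x + 1 / 2 * y by ring]
  linarith

lemma exp_add_div_two_lt {x y : ℝ} (h : x ≠ y) : exp ((x + y) / 2) < (exp x + exp y) / 2 := by
  have := strictConvexOn_exp.2 (Set.mem_univ x) (Set.mem_univ y) h one_half_pos one_half_pos
    (add_halves 1)
  simp only [smul_eq_mul] at this
  rw [show (x + y) / 2 = 1 / 2 * x + 1 / 2 * y by ring]
  linarith

lemma sum_mul_exp_add_div_two_lt {ι : Type*} [Fintype ι] {p x y : ι → ℝ} (hp : ∀ i, 0 < p i)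
    (hxy : x ≠ y) :
    ∑ i, p i * exp ((x i + y i) / 2) < (∑ i, p i * exp (x i) + ∑ i, p i * exp (y i)) / 2 := by
  obtain ⟨k, hk⟩ := Function.ne_iff.1 hxy
  rw [← sum_add_distrib, sum_div]
  refine sum_lt_sum (fun i _ => ?_) ⟨k, mem_univ k, ?_⟩
  · exact (mul_le_mul_of_nonneg_left (exp_add_div_two_le _ _) (hp i).le).trans_eq (by ring)
  · exact (mul_lt_mul_of_pos_left (exp_add_div_two_lt hk) (hp k)).trans_eq (by ring)

lemma log_sum_mul_exp_add_div_two_le {ι : Type*} [Fintype ι] [Nonempty ι] {w : ι → ℝ}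
    (hw : ∀ i, 0 < w i) (x y : ι → ℝ) :
    log (∑ i, w i * exp ((x i + y i) / 2))
      ≤ (log (∑ i, w i * exp (x i)) + log (∑ i, w i * exp (y i))) / 2 := by
  have hpos : ∀ z : ι → ℝ, 0 < ∑ i, w i * exp (z i) := fun z =>
    sum_pos (fun i _ => mul_pos (hw i) (exp_pos _)) univ_nonempty
  -- Cauchy–Schwarz, after writing `w e^{(x+y)/2}` as `√(w e^x) √(w e^y)`
  have hCS : ∑ i, w i * exp ((x i + y i) / 2)
      ≤ √(∑ i, w i * exp (x i)) * √(∑ i, w i * exp (y i)) := by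
    calc ∑ i, w i * exp ((x i + y i) / 2)
        = ∑ i, √(w i * exp (x i)) * √(w i * exp (y i)) := sum_congr rfl fun i _ => by
          rw [← sqrt_mul (mul_pos (hw i) (exp_pos _)).le,
            show w i * exp (x i) * (w i * exp (y i)) = w i ^ 2 * exp (x i + y i) by
              rw [exp_add]; ring,
            sqrt_mul (sq_nonneg _), sqrt_sq (hw i).le, exp_half]
      _ ≤ _ := sum_sqrt_mul_sqrt_le _ (fun i => (mul_pos (hw i) (exp_pos _)).le)
          (fun i => (mul_pos (hw i) (exp_pos _)).le)
  calc log (∑ i, w i * exp ((x i + y i) / 2))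
      ≤ log (√(∑ i, w i * exp (x i)) * √(∑ i, w i * exp (y i))) :=
        log_le_log (by simpa using hpos fun i => (x i + y i) / 2) hCS
    _ = _ := by
      rw [log_mul (sqrt_pos.2 (hpos x)).ne' (sqrt_pos.2 (hpos y)).ne', log_sqrt (hpos x).le,
        log_sqrt (hpos y).le]
      ring

lemma exists_add_sub_of_add_eq_add {G ι κ : Type*} [AddCommGroup G] [Nonempty ι] [Nonempty κ]
    {a a' : ι → G} {b b' : κ → G} (h : ∀ i j, a i + b j = a' i + b' j) :
    ∃ c, (∀ i, a' i = a i + c) ∧ ∀ j, b' j = b j - c := by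
  obtain ⟨i₀⟩ := ‹Nonempty ι›
  obtain ⟨j₀⟩ := ‹Nonempty κ›
  refine ⟨b j₀ - b' j₀, fun i => ?_, fun j => ?_⟩
  · rw [← add_sub_assoc, h i j₀, add_sub_cancel_right]
  · rw [eq_sub_of_add_eq' (h i₀ j).symm, eq_sub_of_add_eq (h i₀ j₀).symm]
    abel

section Fobj

variable {I J : ℕ} {μ : Fin I → ℝ} {β : Fin J → ℝ} {C : Fin I → Fin J → ℝ} {ε η : ℝ}

lemma Fobj_add_const_sub_const [NeZero J] (hμsum : ∑ i, μ i = 1) (hβpos : ∀ j, 0 < β j)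
    (hεη : ε ≠ η) (a : Fin I → ℝ) (b : Fin J → ℝ) (c : ℝ) :
    Fobj μ β C ε η (fun i => a i + c) (fun j => b j - c) = Fobj μ β C ε η a b := by
  have ht : η - ε ≠ 0 := sub_ne_zero.2 hεη.symm
  have hS : 0 < ∑ j, β j * exp (-b j / (η - ε)) :=
    sum_pos (fun j _ => mul_pos (hβpos j) (exp_pos _)) univ_nonempty
  have hlin : ∑ i, μ i * (a i + c) = ∑ i, μ i * a i + c := by
    simp only [mul_add, sum_add_distrib, ← sum_mul, hμsum, one_mul]
  have hlse : ∑ j, β j * exp (-(b j - c) / (η - ε))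
      = (∑ j, β j * exp (-b j / (η - ε))) * exp (c / (η - ε)) := by
    rw [sum_mul]
    exact sum_congr rfl fun j _ => by rw [mul_assoc, ← exp_add]; ring_nf
  simp only [Fobj, hlin, add_add_sub_cancel, hlse, log_mul hS.ne' (exp_pos _).ne', log_exp]
  field_simp
  ring

lemma add_div_two_lt_Fobj_midpoint (hμpos : ∀ i, 0 < μ i) (hβpos : ∀ j, 0 < β j) (hε : 0 < ε)
    (hεη : ε ≤ η) {a a' : Fin I → ℝ} {b b' : Fin J → ℝ}
    (h : ∃ i j, a i + b j ≠ a' i + b' j) :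
    (Fobj μ β C ε η a b + Fobj μ β C ε η a' b') / 2
      < Fobj μ β C ε η (fun i => (a i + a' i) / 2) (fun j => (b j + b' j) / 2) := by
  obtain ⟨i₀, j₀, hne⟩ := h
  have : Nonempty (Fin J) := ⟨j₀⟩
  have hlin : ∑ i, μ i * ((a i + a' i) / 2) = (∑ i, μ i * a i + ∑ i, μ i * a' i) / 2 := by
    rw [← sum_add_distrib, sum_div]
    exact sum_congr rfl fun i _ => by ring
  have hexp : ∑ i, ∑ j, μ i * β j * exp (((a i + a' i) / 2 + (b j + b' j) / 2 - C i j) / ε)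
      < (∑ i, ∑ j, μ i * β j * exp ((a i + b j - C i j) / ε)
        + ∑ i, ∑ j, μ i * β j * exp ((a' i + b' j - C i j) / ε)) / 2 := by
    have hxy : (fun k : Fin I × Fin J => (a k.1 + b k.2 - C k.1 k.2) / ε)
        ≠ fun k => (a' k.1 + b' k.2 - C k.1 k.2) / ε := fun hxy => hne <| by
      have := congrFun hxy (i₀, j₀)
      rwa [div_left_inj' hε.ne', sub_left_inj] at this
    have := sum_mul_exp_add_div_two_lt (fun k => mul_pos (hμpos k.1) (hβpos k.2)) hxy
    simp only [← Fintype.sum_prod_type']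
    convert this using 4 with k
    ring
  have hlse : log (∑ j, β j * exp (-((b j + b' j) / 2) / (η - ε)))
      ≤ (log (∑ j, β j * exp (-b j / (η - ε))) + log (∑ j, β j * exp (-b' j / (η - ε)))) / 2 := by
    convert log_sum_mul_exp_add_div_two_le hβpos (fun j => -b j / (η - ε))
      (fun j => -b' j / (η - ε)) using 5 with j
    ring
  simp only [Fobj, hlin]
  linarith [mul_lt_mul_of_pos_left hexp hε, mul_le_mul_of_nonneg_left hlse (sub_nonneg.2 hεη)]

lemma add_eq_add_of_Fobj_maximizers (hμpos : ∀ i, 0 < μ i) (hβpos : ∀ j, 0 < β j) (hε : 0 < ε)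
    (hεη : ε ≤ η) {a a' : Fin I → ℝ} {b b' : Fin J → ℝ}
    (hmax : ∀ a'' b'', Fobj μ β C ε η a'' b'' ≤ Fobj μ β C ε η a b)
    (hmax' : ∀ a'' b'', Fobj μ β C ε η a'' b'' ≤ Fobj μ β C ε η a' b') :
    ∀ i j, a i + b j = a' i + b' j := by
  by_contra! h
  have hmid := add_div_two_lt_Fobj_midpoint (C := C) hμpos hβpos hε hεη h
  linarith [hmax (fun i => (a i + a' i) / 2) (fun j => (b j + b' j) / 2), hmax' a b]

end Fobj

theorem dual_maximizers_affine_line_general (I J : ℕ) (hI : 1 ≤ I) (hJ : 1 ≤ J)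
    (μ : Fin I → ℝ) (hμpos : ∀ i, 0 < μ i) (hμsum : ∑ i, μ i = 1)
    (β : Fin J → ℝ) (hβpos : ∀ j, 0 < β j)
    (C : Fin I → Fin J → ℝ) (ε η : ℝ) (hε : 0 < ε) (hεη : ε < η) :
    (∀ (a : Fin I → ℝ) (b : Fin J → ℝ),
      (∀ (a' : Fin I → ℝ) (b' : Fin J → ℝ), Fobj μ β C ε η a' b' ≤ Fobj μ β C ε η a b) →
      ∀ c : ℝ,
        ∀ (a' : Fin I → ℝ) (b' : Fin J → ℝ),
          Fobj μ β C ε η a' b' ≤ Fobj μ β C ε η (fun i => a i + c) (fun j => b j - c)) ∧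
    (∀ (a : Fin I → ℝ) (b : Fin J → ℝ) (a' : Fin I → ℝ) (b' : Fin J → ℝ),
      (∀ (a'' : Fin I → ℝ) (b'' : Fin J → ℝ), Fobj μ β C ε η a'' b'' ≤ Fobj μ β C ε η a b) →
      (∀ (a'' : Fin I → ℝ) (b'' : Fin J → ℝ), Fobj μ β C ε η a'' b'' ≤ Fobj μ β C ε η a' b') →
      ∃ c : ℝ, (∀ i, a' i = a i + c) ∧ (∀ j, b' j = b j - c)) := by
  have : NeZero I := ⟨by omega⟩
  have : NeZero J := ⟨by omega⟩
  refine ⟨fun a b hmax c a' b' => ?_, fun a b a' b' hmax hmax' => ?_⟩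
  · rw [Fobj_add_const_sub_const hμsum hβpos hεη.ne a b c]
    exact hmax a' b'
  · exact exists_add_sub_of_add_eq_add
      (add_eq_add_of_Fobj_maximizers hμpos hβpos hε hεη.le hmax hmax')

/-- The set of maximizers of the dual objective `F` is an affine line in the
direction `((1,…,1),(−1,…,−1))`: it is stable under the translations
`(a, b) ↦ (a + c𝟙, b − c𝟙)`, and any two maximizers differ by such a translation. -/
theorem dual_maximizers_affine_line (I J : ℕ) (hI : 1 ≤ I) (hJ : 1 ≤ J)
    (μ : Fin I → ℝ) (hμpos : ∀ i, 0 < μ i) (hμsum : ∑ i, μ i = 1)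
    (β : Fin J → ℝ) (hβpos : ∀ j, 0 < β j) (hβsum : ∑ j, β j = 1)
    (C : Fin I → Fin J → ℝ) (ε η : ℝ) (hε : 0 < ε) (hεη : ε < η) :
    (∀ (a : Fin I → ℝ) (b : Fin J → ℝ),
      (∀ (a' : Fin I → ℝ) (b' : Fin J → ℝ), Fobj μ β C ε η a' b' ≤ Fobj μ β C ε η a b) →
      ∀ c : ℝ,
        ∀ (a' : Fin I → ℝ) (b' : Fin J → ℝ),
          Fobj μ β C ε η a' b' ≤ Fobj μ β C ε η (fun i => a i + c) (fun j => b j - c)) ∧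
    (∀ (a : Fin I → ℝ) (b : Fin J → ℝ) (a' : Fin I → ℝ) (b' : Fin J → ℝ),
      (∀ (a'' : Fin I → ℝ) (b'' : Fin J → ℝ), Fobj μ β C ε η a'' b'' ≤ Fobj μ β C ε η a b) →
      (∀ (a'' : Fin I → ℝ) (b'' : Fin J → ℝ), Fobj μ β C ε η a'' b'' ≤ Fobj μ β C ε η a' b') →
      ∃ c : ℝ, (∀ i, a' i = a i + c) ∧ (∀ j, b' j = b j - c)) :=
  dual_maximizers_affine_line_general I J hI hJ μ hμpos hμsum β hβpos C ε η hε hεη
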